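/- Let R be a positive definite matrix, let 𝓔 be the twirling map 𝓔(S) = (1/|G|) Σ_{g∈G} U_g S U_g† for a finite group of unitaries, and let S be a positive definite matrix fixed by 𝓔. Define K(S) = S^{-1/2} (𝓔((S^{1/2} R S^{1/2})^{1/2}))² S^{-1/2}. Then K(S) ≤ λ_max(R) · I. -/

import Mathlib

open Matrix
open scoped ComplexOrder Classical

variable {n : Type*} [Fintype n] [DecidableEq n]

/-- The positive semidefinite square root of a matrix (junk value `0` if not PSD). -/
noncomputable def msqrt (A : Matrix n n ℂ) : Matrix n n ℂ :=
  if h : A.PosSemidef then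
    (h.1.eigenvectorUnitary : Matrix n n ℂ) * diagonal (((↑) : ℝ → ℂ) ∘ Real.sqrt ∘ h.1.eigenvalues) *
      (star h.1.eigenvectorUnitary : Matrix n n ℂ)
  else 0

/-- The trace norm `‖M‖₁ = Tr √(Mᴴ M)`. -/
noncomputable def traceNorm (M : Matrix n n ℂ) : ℝ :=
  ((msqrt (Mᴴ * M)).trace).re

/-- The fidelity `F(R,S) = (Tr √(√R S √R))²` of positive semidefinite matrices. -/
noncomputable def fidelity (R S : Matrix n n ℂ) : ℝ :=
  (((msqrt (msqrt R * S * msqrt R)).trace).re) ^ 2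

/-- The squared Bures distance `B(R,S)² = Tr R + Tr S - 2 √F(R,S)`. -/
noncomputable def bures2 (R S : Matrix n n ℂ) : ℝ :=
  (R.trace).re + (S.trace).re - 2 * Real.sqrt (fidelity R S)

/-- The twirling map `𝓔(X) = (1/|G|) ∑ g, U g * X * (U g)ᴴ`. -/
noncomputable def twirl {G : Type*} [Fintype G] (U : G → Matrix n n ℂ)
    (X : Matrix n n ℂ) : Matrix n n ℂ :=
  (Fintype.card G : ℂ)⁻¹ • ∑ g, U g * X * (U g)ᴴ

/-- The maximum eigenvalue of a Hermitian matrix. -/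
noncomputable def lamMax {A : Matrix n n ℂ} (hA : A.IsHermitian) : ℝ :=
  ⨆ i, hA.eigenvalues i

/-- The minimum eigenvalue of a Hermitian matrix. -/
noncomputable def lamMin {A : Matrix n n ℂ} (hA : A.IsHermitian) : ℝ :=
  ⨅ i, hA.eigenvalues i

/-- The fixed point iteration map `K(S) = S^{-1/2} (𝓔((S^{1/2} R S^{1/2})^{1/2}))² S^{-1/2}`. -/
noncomputable def iterMap {G : Type*} [Fintype G] (U : G → Matrix n n ℂ)
    (R S : Matrix n n ℂ) : Matrix n n ℂ :=
  (msqrt S)⁻¹ * (twirl U (msqrt (msqrt S * R * msqrt S))) ^ 2 * (msqrt S)⁻¹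

/-! With `T = √S` and `B = √(T R T)`, the bound `R ≤ λ_max(R) • 1` conjugated by `T` and twirled
gives `𝓔(B²) = 𝓔(T R T) ≤ λ_max(R) • 𝓔(S) = λ_max(R) • S`, using the invariance of `S`. The
Kadison–Schwarz inequality `𝓔(B)² ≤ 𝓔(B²)` for the unital channel `𝓔` puts `𝓔(B)²` below the
same bound, and conjugating by `T⁻¹` turns `S` into `1`. -/

open scoped MatrixOrder

theorem sum_star_sub_mul_sub_of_sum_eq {ι R : Type*} [Fintype ι] [Ring R] [StarRing R]
    (Y : ι → R) {μ : R} (hμ : ∑ i, Y i = Fintype.card ι • μ) :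
    ∑ i, star (Y i - μ) * (Y i - μ) = ∑ i, star (Y i) * Y i - Fintype.card ι • (star μ * μ) := by
  simp only [star_sub, sub_mul, mul_sub, Finset.sum_sub_distrib, ← Finset.sum_mul,
    ← Finset.mul_sum, ← star_sum, hμ, Finset.sum_const, Finset.card_univ, star_nsmul,
    smul_mul_assoc, mul_smul_comm]
  abel

theorem msqrt_eq_sqrt {A : Matrix n n ℂ} (hA : A.PosSemidef) : msqrt A = CFC.sqrt A := by
  rw [CFC.sqrt_eq_cfc, cfc_nnreal_eq_real _ A, hA.1.cfc_eq, msqrt, dif_pos hA]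
  simp [IsHermitian.cfc, Function.comp_def, hA.eigenvalues_nonneg]

theorem le_lamMax_smul_one {A : Matrix n n ℂ} (hA : A.IsHermitian) :
    A ≤ (lamMax hA : ℂ) • 1 := by
  have hsmul : ((lamMax hA : ℂ) • 1 : Matrix n n ℂ) = algebraMap ℝ _ (lamMax hA) := by
    rw [Algebra.algebraMap_eq_smul_one, Complex.coe_smul]
  rw [hsmul]
  refine le_algebraMap_of_spectrum_le (fun x hx => ?_) hA.isSelfAdjoint
  obtain ⟨i, rfl⟩ := hA.spectrum_real_eq_range_eigenvalues ▸ hx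
  exact le_ciSup (Set.finite_range _).bddAbove i

section Twirl

variable {m G : Type*} [Fintype m] [Fintype G] (U : G → Matrix m m ℂ)

theorem twirl_eq_of_isEmpty [IsEmpty G] (X : Matrix m m ℂ) : twirl U X = 0 := by
  simp [twirl]

theorem card_nsmul_twirl [Nonempty G] (X : Matrix m m ℂ) :
    Fintype.card G • twirl U X = ∑ g, U g * X * star (U g) := by
  rw [twirl, ← Nat.cast_smul_eq_nsmul ℂ, smul_smul,
    mul_inv_cancel₀ (Nat.cast_ne_zero.mpr Fintype.card_ne_zero), one_smul]
  rfl

theorem twirl_sub (X Y : Matrix m m ℂ) : twirl U (X - Y) = twirl U X - twirl U Y := by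
  simp only [twirl, mul_sub, sub_mul, Finset.sum_sub_distrib, smul_sub]

theorem twirl_smul (a : ℂ) (X : Matrix m m ℂ) : twirl U (a • X) = a • twirl U X := by
  simp only [twirl, mul_smul_comm, smul_mul_assoc, ← Finset.smul_sum, smul_comm a]

theorem star_twirl (X : Matrix m m ℂ) : star (twirl U X) = twirl U (star X) := by
  simp [twirl, star_sum, star_eq_conjTranspose, conjTranspose_mul, mul_assoc]

theorem twirl_nonneg {X : Matrix m m ℂ} (hX : 0 ≤ X) : 0 ≤ twirl U X := by
  refine (PosSemidef.smul ?_ (by simp)).nonneg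
  exact (Finset.sum_nonneg fun g _ => star_right_conjugate_nonneg hX (U g)).posSemidef

theorem twirl_mono {X Y : Matrix m m ℂ} (h : X ≤ Y) : twirl U X ≤ twirl U Y := by
  rw [← sub_nonneg, ← twirl_sub]
  exact twirl_nonneg U (sub_nonneg.mpr h)

/-- The defect is the variance `|G|⁻¹ ∑ g, (Y g - E)⋆ (Y g - E)` of the conjugates
`Y g = U g X (U g)⋆` around their mean `E = 𝓔(X)`. -/
theorem star_twirl_mul_twirl_le [DecidableEq m] (hU : ∀ g, U g ∈ unitaryGroup m ℂ)
    (X : Matrix m m ℂ) : star (twirl U X) * twirl U X ≤ twirl U (star X * X) := by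
  rcases isEmpty_or_nonempty G with _ | _
  · simp [twirl_eq_of_isEmpty]
  set E := twirl U X
  set Y : G → Matrix m m ℂ := fun g => U g * X * star (U g)
  have hstarY : ∀ g, star (Y g) * Y g = U g * (star X * X) * star (U g) := fun g => by
    simp only [Y, star_mul, star_star, mul_assoc, ← mul_assoc (star (U g)) (U g),
      (mem_unitaryGroup_iff'.mp (hU g)), one_mul]
  have hvar : twirl U (star X * X) - star E * E =
      (Fintype.card G : ℂ)⁻¹ • ∑ g, star (Y g - E) * (Y g - E) := by
    rw [sum_star_sub_mul_sub_of_sum_eq Y (card_nsmul_twirl U X).symm, smul_sub,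
      ← Nat.cast_smul_eq_nsmul ℂ, smul_smul,
      inv_mul_cancel₀ (Nat.cast_ne_zero.mpr Fintype.card_ne_zero), one_smul]
    simp only [hstarY]
    rfl
  rw [← sub_nonneg, hvar]
  refine (PosSemidef.smul ?_ (by simp)).nonneg
  exact (Finset.sum_nonneg fun g _ => star_mul_self_nonneg (Y g - E)).posSemidef

end Twirl

/-- `K(S) ≤ λ_max(R) · I` for `S` positive definite and invariant. -/
theorem iterMap_le_lamMax {G : Type*} [Fintype G] (U : G → Matrix n n ℂ)
    (hU : ∀ g, U g ∈ Matrix.unitaryGroup n ℂ)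
    (R S : Matrix n n ℂ) (hR : R.PosDef) (hS : S.PosDef)
    (hfix : twirl U S = S) :
    ((lamMax hR.isHermitian : ℂ) • (1 : Matrix n n ℂ) - iterMap U R S).PosSemidef := by
  refine Matrix.le_iff.mp ?_
  set c := lamMax hR.isHermitian
  set T := CFC.sqrt S
  have hT : IsSelfAdjoint T := (CFC.sqrt_nonneg S).isSelfAdjoint
  have hTT : T * T = S := CFC.sqrt_mul_sqrt_self S hS.posSemidef.nonneg
  have hTdet : IsUnit T.det := (isUnit_iff_isUnit_det T).mp <|
    (CFC.isUnit_sqrt_iff S hS.posSemidef.nonneg).mpr hS.isUnit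
  have hTinv : IsSelfAdjoint T⁻¹ := Matrix.IsHermitian.inv hT
  have hRT : 0 ≤ T * R * T := hT.conjugate_nonneg hR.posSemidef.nonneg
  set B := CFC.sqrt (T * R * T)
  have hB : star B = B := (CFC.sqrt_nonneg _).isSelfAdjoint.star_eq
  have hE : twirl U B ^ 2 = star (twirl U B) * twirl U B := by rw [star_twirl, hB, sq]
  calc iterMap U R S = T⁻¹ * (star (twirl U B) * twirl U B) * T⁻¹ := by
        rw [iterMap, msqrt_eq_sqrt hS.posSemidef, msqrt_eq_sqrt hRT.posSemidef, hE]
    _ ≤ T⁻¹ * twirl U (star B * B) * T⁻¹ :=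
        hTinv.conjugate_le_conjugate (star_twirl_mul_twirl_le U hU B)
    _ = T⁻¹ * twirl U (T * R * T) * T⁻¹ := by rw [hB, CFC.sqrt_mul_sqrt_self _ hRT]
    _ ≤ T⁻¹ * twirl U (T * ((c : ℂ) • 1) * T) * T⁻¹ :=
        hTinv.conjugate_le_conjugate <| twirl_mono U <|
          hT.conjugate_le_conjugate (le_lamMax_smul_one hR.isHermitian)
    _ = (c : ℂ) • 1 := by
        rw [mul_smul_comm, mul_one, smul_mul_assoc, hTT, twirl_smul, hfix, mul_smul_comm,
          smul_mul_assoc, ← hTT, ← mul_assoc, nonsing_inv_mul T hTdet, one_mul,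
          mul_nonsing_inv T hTdet]
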